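/- Let R be a relation over a finite set D with exactly m tuples, and let f be a partial function of arity n > m that does not preserve R (is not a partial polymorphism of R). Then there exists a partial function g of arity at most m, obtained from f by identifying arguments, such that g does not preserve R. -/
import Mathlib


def IsPartialPolymorphism {D : Type*} {k n : ℕ} (f : (Fin k → D) → Option D)
    (R : Set (Fin n → D)) : Prop :=
  ∀ (ts : Fin k → Fin n → D) (u : Fin n → D), (∀ l, ts l ∈ R) →
    (∀ i, f (fun l => ts l i) = some (u i)) → u ∈ R

/-- If `R` has exactly `m` tuples and the partial function `f` of arity `n > m` does not
preserve `R`, then some identification of arguments of `f` of arity at most `m` does not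
preserve `R`. -/
theorem stmt8 {D : Type*} [Fintype D] {r n m : ℕ} (R : Set (Fin r → D))
    (hcard : R.ncard = m) (f : (Fin n → D) → Option D) (hnm : m < n)
    (hf : ¬ IsPartialPolymorphism f R) :
    ∃ (n' : ℕ) (σ : Fin n → Fin n'), n' ≤ m ∧ Function.Surjective σ ∧
      ¬ IsPartialPolymorphism (fun x : Fin n' → D => f (x ∘ σ)) R := by
  unfold IsPartialPolymorphism at hf
  push_neg at hf
  obtain ⟨ts, u, hts, hu, hur⟩ := hf
  set T := Set.range ts with hT
  haveI : Fintype T := Set.Finite.fintype (Set.toFinite T)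
  set n' := Fintype.card T with hn'
  let e : T ≃ Fin n' := Fintype.equivFin T
  refine ⟨n', fun l => e ⟨ts l, Set.mem_range_self l⟩, ?_, ?_, ?_⟩
  · have h1 : T ⊆ R := by rintro _ ⟨l, rfl⟩; exact hts l
    have h2 := Set.ncard_le_ncard h1 (Set.toFinite R)
    rwa [hcard, ← Nat.card_coe_set_eq, Nat.card_eq_fintype_card] at h2
  · intro j
    obtain ⟨l, hl⟩ := (e.symm j).2
    refine ⟨l, ?_⟩
    have : (⟨ts l, Set.mem_range_self l⟩ : T) = e.symm j := Subtype.ext hl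
    simp [this]
  · unfold IsPartialPolymorphism
    push_neg
    refine ⟨fun j => (e.symm j).val, u, fun j => ?_, fun i => ?_, hur⟩
    · obtain ⟨l, hl⟩ := (e.symm j).2
      show (e.symm j).val ∈ R
      exact hl ▸ hts l
    · have h2 : ((fun j => (e.symm j).val i) ∘ fun l => e ⟨ts l, Set.mem_range_self l⟩)
          = fun l => ts l i := by
        funext l; simp [Function.comp]
      show f ((fun j => (e.symm j).val i) ∘ fun l => e ⟨ts l, Set.mem_range_self l⟩) = some (u i)
      rw [h2]; exact hu i
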